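/- arXiv:2211.04212 — 8 statements merged into one kernel-verified Lean document; each statement's English description precedes it below -/
import Mathlib

section
/- For a prime p and a positive integer r, the number of pairs (i,j) with 0 ≤ i, j < p^r such that binomial(j,i) is not divisible by p equals (p(p+1)/2)^r. -/
/-! By Lucas' theorem, `p ∤ C(j, i)` iff `p ∤ C(j % p, i % p)` and `p ∤ C(j / p, i / p)`, so
splitting off the least significant base-`p` digit of `i` and `j` identifies the nonzero
entries of the `p n × p n` Pascal matrix mod `p` with pairs of nonzero entries of the `p × p`
and `n × n` ones. For `i, j < p` we have `p ∤ C(j, i)` iff `i ≤ j`, which gives `p (p + 1) / 2`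
entries, and induction on `r` gives the power. -/

open Finset

namespace Nat

lemma Prime.dvd_choose_iff_lt {p n k : ℕ} (hp : p.Prime) (hn : n < p) :
    p ∣ n.choose k ↔ n < k := by
  refine ⟨fun h => ?_, fun h => by simp [choose_eq_zero_of_lt h]⟩
  by_contra! hkn
  exact hp.one_lt.ne' ((hp.coprime_choose_of_lt hn hkn).eq_one_of_dvd h)

lemma Prime.dvd_choose_iff_dvd_choose_mod_or_dvd_choose_div {p : ℕ} (hp : p.Prime) (n k : ℕ) :
    p ∣ n.choose k ↔ p ∣ (n % p).choose (k % p) ∨ p ∣ (n / p).choose (k / p) := by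
  have : Fact p.Prime := ⟨hp⟩
  rw [Choose.choose_modEq_choose_mod_mul_choose_div_nat.dvd_iff dvd_rfl, hp.dvd_mul]

def nondvdChoosePairs (p n : ℕ) : Finset (ℕ × ℕ) :=
  (range n ×ˢ range n).filter fun ij => ¬ p ∣ ij.2.choose ij.1

@[simp]
lemma mem_nondvdChoosePairs {p n : ℕ} {ij : ℕ × ℕ} :
    ij ∈ nondvdChoosePairs p n ↔ (ij.1 < n ∧ ij.2 < n) ∧ ¬ p ∣ ij.2.choose ij.1 := by
  simp [nondvdChoosePairs]

lemma card_nondvdChoosePairs_one {p : ℕ} (hp : p ≠ 1) : (nondvdChoosePairs p 1).card = 1 := by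
  rw [card_eq_one]
  refine ⟨(0, 0), ?_⟩
  ext ⟨i, j⟩
  simp +contextual [hp]

lemma card_nondvdChoosePairs_self {p : ℕ} (hp : p.Prime) :
    (nondvdChoosePairs p p).card = p * (p + 1) / 2 := by
  have hcol : ∀ j ∈ range p, ((range p).filter (· ≤ j)).card = j + 1 := fun j hj => by
    rw [← card_range (j + 1)]
    congr 1
    ext i
    simp only [mem_filter, mem_range] at hj ⊢
    omega
  calc (nondvdChoosePairs p p).card
      = ∑ j ∈ range p, ((range p).filter (· ≤ j)).card := by
        simp only [nondvdChoosePairs, card_filter, sum_product_right]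
        refine sum_congr rfl fun j hj => sum_congr rfl fun i _ => ?_
        simp only [hp.dvd_choose_iff_lt (mem_range.mp hj), not_lt]
    _ = ∑ j ∈ range (p + 1), j := by rw [sum_congr rfl hcol, sum_range_succ']; rfl
    _ = p * (p + 1) / 2 := by rw [sum_range_id, add_tsub_cancel_right, mul_comm]

lemma Prime.mem_nondvdChoosePairs_mul_iff {p n : ℕ} (hp : p.Prime) {ij : ℕ × ℕ} :
    ij ∈ nondvdChoosePairs p (p * n) ↔
      (ij.1 % p, ij.2 % p) ∈ nondvdChoosePairs p p ∧
        (ij.1 / p, ij.2 / p) ∈ nondvdChoosePairs p n := by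
  simp only [mem_nondvdChoosePairs, hp.dvd_choose_iff_dvd_choose_mod_or_dvd_choose_div ij.2,
    Nat.div_lt_iff_lt_mul hp.pos, mod_lt _ hp.pos, mul_comm p]
  tauto

lemma Prime.card_nondvdChoosePairs_mul {p : ℕ} (hp : p.Prime) (n : ℕ) :
    (nondvdChoosePairs p (p * n)).card =
      (nondvdChoosePairs p p).card * (nondvdChoosePairs p n).card := by
  have digits {a c : ℕ} (ha : a < p) : (a + p * c) % p = a ∧ (a + p * c) / p = c := by
    rw [add_mul_mod_self_left, mod_eq_of_lt ha, add_mul_div_left _ _ hp.pos, div_eq_of_lt ha,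
      zero_add]
    exact ⟨rfl, rfl⟩
  rw [← card_product]
  refine card_nbij' (fun ij => ((ij.1 % p, ij.2 % p), (ij.1 / p, ij.2 / p)))
    (fun ab => (ab.1.1 + p * ab.2.1, ab.1.2 + p * ab.2.2)) ?_ ?_ ?_ ?_
  · intro ij hij
    simpa only [coe_product, Set.mem_prod, mem_coe] using hp.mem_nondvdChoosePairs_mul_iff.mp hij
  · rintro ⟨⟨a, b⟩, c, d⟩ habcd
    simp only [coe_product, Set.mem_prod, mem_coe] at habcd
    obtain ⟨⟨ha, hb⟩, -⟩ := mem_nondvdChoosePairs.mp habcd.1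
    simpa only [mem_coe, hp.mem_nondvdChoosePairs_mul_iff, digits ha, digits hb] using habcd
  · intro ij _
    simp only [mod_add_div]
  · rintro ⟨⟨a, b⟩, c, d⟩ habcd
    simp only [coe_product, Set.mem_prod, mem_coe] at habcd
    obtain ⟨⟨ha, hb⟩, -⟩ := mem_nondvdChoosePairs.mp habcd.1
    simp only [digits ha, digits hb]

end Nat

theorem count_nonzero_binom_pow_general (p r : ℕ) (hp : p.Prime) :
    ((Finset.range (p ^ r) ×ˢ Finset.range (p ^ r)).filter
      (fun ij => ¬ p ∣ (ij.2).choose ij.1)).card = (p * (p + 1) / 2) ^ r := by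
  change (Nat.nondvdChoosePairs p (p ^ r)).card = _
  induction r with
  | zero => exact Nat.card_nondvdChoosePairs_one hp.ne_one
  | succ r ih =>
    rw [pow_succ', hp.card_nondvdChoosePairs_mul, Nat.card_nondvdChoosePairs_self hp, ih, pow_succ']

theorem count_nonzero_binom_pow (p r : ℕ) (hp : p.Prime) (hr : 1 ≤ r) :
    ((Finset.range (p ^ r) ×ˢ Finset.range (p ^ r)).filter
      (fun ij => ¬ p ∣ (ij.2).choose ij.1)).card = (p * (p + 1) / 2) ^ r :=
  count_nonzero_binom_pow_general p r hp
end

section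
/- For a prime p and positive integer r, the number of pairs (i,j) with 0 ≤ i,j < p^r and binomial(i+j, j) not divisible by p equals (p(p+1)/2)^r. -/
/-!
By Lucas' theorem, `p ∤ C(i + j, j)` exactly when adding `i` and `j` in base `p` produces no
carry (Kummer). Splitting off the lowest digit, the admissible pairs of `p^(r+1) × p^(r+1)`
are therefore the products of a pair of digits `a + b < p` — of which there are `p(p+1)/2` —
with an admissible pair of `p^r × p^r`.
-/

open Finset

theorem Nat.Prime.dvd_choose_iff_lt_s7 {p m k : ℕ} (hp : p.Prime) (hm : m < p) :
    p ∣ m.choose k ↔ m < k := by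
  rcases lt_or_ge m k with hlt | hle
  · simp [Nat.choose_eq_zero_of_lt hlt, hlt]
  · simp [hle.not_gt, (hp.coprime_iff_not_dvd).1 (hp.coprime_choose_of_lt hm hle)]

theorem Nat.Prime.dvd_choose_add_iff {p : ℕ} (hp : p.Prime) (i j : ℕ) :
    p ∣ (i + j).choose j ↔ p ≤ i % p + j % p ∨ p ∣ (i / p + j / p).choose (j / p) := by
  have := Fact.mk hp
  rw [(Choose.choose_modEq_choose_mod_mul_choose_div_nat (n := i + j) (k := j)).dvd_iff dvd_rfl,
    hp.dvd_mul, hp.dvd_choose_iff_lt_s7 (Nat.mod_lt _ hp.pos)]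
  rcases lt_or_ge (i % p + j % p) p with hc | hc
  · rw [Nat.add_mod_of_add_mod_lt hc, Nat.add_div_eq_of_add_mod_lt hc]
    simp [hc.not_ge]
  · -- a carry makes the last digit of `i + j` smaller than that of `j`
    have hcarry := Nat.add_mod_add_of_le_add_mod hc
    have hi := Nat.mod_lt i hp.pos
    simp only [hc, true_or, iff_true]
    left
    omega

theorem card_filter_add_lt_range (n : ℕ) :
    #{x ∈ range n ×ˢ range n | x.1 + x.2 < n} = n * (n + 1) / 2 := by
  have hchoose : n * (n + 1) / 2 = (#(range (n + 1))).choose 2 := by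
    rw [card_range, Nat.choose_two_right, Nat.add_sub_cancel, mul_comm]
  rw [hchoose, ← card_product_filter_lt]
  apply card_nbij' (fun x => (x.1, x.1 + x.2 + 1)) (fun y => (y.1, y.2 - y.1 - 1))
  · rintro ⟨a, b⟩ h
    simp only [mem_coe, mem_filter, mem_product, mem_range] at h ⊢
    omega
  · rintro ⟨a, c⟩ h
    simp only [mem_coe, mem_filter, mem_product, mem_range] at h ⊢
    omega
  · rintro ⟨a, b⟩ -
    exact Prod.ext rfl (by dsimp only; omega)
  · rintro ⟨a, c⟩ h
    simp only [mem_coe, mem_filter, mem_product, mem_range] at h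
    exact Prod.ext rfl (by dsimp only; omega)

theorem card_filter_range_mul {n m : ℕ} (hn : 0 < n) {P Q R : ℕ × ℕ → Prop}
    [DecidablePred P] [DecidablePred Q] [DecidablePred R]
    (hP : ∀ x, P x ↔ Q (x.1 % n, x.2 % n) ∧ R (x.1 / n, x.2 / n)) :
    #{x ∈ range (n * m) ×ˢ range (n * m) | P x} =
      #{x ∈ range n ×ˢ range n | Q x} * #{x ∈ range m ×ˢ range m | R x} := by
  rw [← card_product]
  apply card_nbij' (fun x => ((x.1 % n, x.2 % n), (x.1 / n, x.2 / n)))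
    (fun y => (y.1.1 + n * y.2.1, y.1.2 + n * y.2.2))
  · rintro ⟨i, j⟩ hij
    simp only [mem_coe, mem_filter, mem_product, mem_range, hP] at hij ⊢
    exact ⟨⟨⟨Nat.mod_lt i hn, Nat.mod_lt j hn⟩, hij.2.1⟩,
      ⟨⟨Nat.div_lt_of_lt_mul hij.1.1, Nat.div_lt_of_lt_mul hij.1.2⟩, hij.2.2⟩⟩
  · rintro ⟨⟨a, b⟩, ⟨c, d⟩⟩ h
    simp only [mem_coe, mem_filter, mem_product, mem_range] at h
    obtain ⟨⟨⟨ha, hb⟩, hab⟩, ⟨⟨hc, hd⟩, hcd⟩⟩ := h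
    simp only [mem_coe, mem_filter, mem_product, mem_range, hP, Nat.add_mul_mod_self_left,
      Nat.add_mul_div_left _ _ hn, Nat.mod_eq_of_lt ha, Nat.mod_eq_of_lt hb, Nat.div_eq_of_lt ha,
      Nat.div_eq_of_lt hb, zero_add]
    exact ⟨⟨Nat.add_mul_lt_mul_of_lt_of_lt ha hc, Nat.add_mul_lt_mul_of_lt_of_lt hb hd⟩, hab, hcd⟩
  · rintro ⟨i, j⟩ -
    simp [Nat.mod_add_div]
  · rintro ⟨⟨a, b⟩, ⟨c, d⟩⟩ h
    simp only [mem_coe, mem_filter, mem_product, mem_range] at h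
    obtain ⟨⟨⟨ha, hb⟩, -⟩, -⟩ := h
    simp [Nat.add_mul_mod_self_left, Nat.add_mul_div_left _ _ hn, Nat.mod_eq_of_lt ha,
      Nat.mod_eq_of_lt hb, Nat.div_eq_of_lt ha, Nat.div_eq_of_lt hb]

theorem count_nonzero_pascal_pow_general (p r : ℕ) (hp : p.Prime) :
    ((Finset.range (p ^ r) ×ˢ Finset.range (p ^ r)).filter
      (fun ij => ¬ p ∣ (ij.1 + ij.2).choose ij.2)).card = (p * (p + 1) / 2) ^ r := by
  induction r with
  | zero => simp [filter_singleton, hp.ne_one]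
  | succ r ih =>
    have hdigit (x : ℕ × ℕ) : ¬ p ∣ (x.1 + x.2).choose x.2 ↔
        x.1 % p + x.2 % p < p ∧ ¬ p ∣ (x.1 / p + x.2 / p).choose (x.2 / p) := by
      rw [hp.dvd_choose_add_iff, not_or, not_le]
    rw [pow_succ', card_filter_range_mul (Q := fun x => x.1 + x.2 < p)
      (R := fun x => ¬ p ∣ (x.1 + x.2).choose x.2) hp.pos hdigit, card_filter_add_lt_range, ih,
      pow_succ']

theorem count_nonzero_pascal_pow (p r : ℕ) (hp : p.Prime) (hr : 1 ≤ r) :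
    ((Finset.range (p ^ r) ×ˢ Finset.range (p ^ r)).filter
      (fun ij => ¬ p ∣ (ij.1 + ij.2).choose ij.2)).card = (p * (p + 1) / 2) ^ r :=
  count_nonzero_pascal_pow_general p r hp
end

section
/- For all non-negative integers t ≥ 1, k, and j with j ≥ t: sum_{i=0}^{t-1} (-1)^{t+i+1} binomial(t,i) · binomial(k+j+i, j) = binomial(k+j+t, j) - binomial(k+j, j-t). -/
open Finset

/-- The left side is the `t`-th forward difference of `n ↦ n.choose j` at `m`, and each
forward difference lowers the lower index by one (Pascal's rule). -/
theorem sum_neg_one_pow_mul_choose_mul_choose_add {t j : ℕ} (m : ℕ) (htj : t ≤ j) :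
    ∑ i ∈ range (t + 1), (-1 : ℤ) ^ (t - i) * t.choose i * (m + i).choose j
      = m.choose (j - t) := by
  have h := fwdDiff_iter_eq_sum_shift 1 (fun x ↦ x.choose (t + (j - t)) : ℕ → ℤ) t m
  rw [fwdDiff_iter_choose, Nat.add_sub_cancel' htj] at h
  simpa using h.symm

theorem neg_one_pow_add_eq_pow_sub {R : Type*} [Monoid R] [HasDistribNeg R] {i t : ℕ}
    (hi : i ≤ t) : (-1 : R) ^ (t + i) = (-1) ^ (t - i) := by
  rw [show t + i = t - i + 2 * i by omega, pow_add, pow_mul, neg_one_sq, one_pow, mul_one]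

theorem alternating_binom_partial_ge_general (t k j : ℕ) (hj : t ≤ j) :
    (∑ i ∈ Finset.range t,
        (-1 : ℤ) ^ (t + i + 1) * (t.choose i) * ((k + j + i).choose j))
      = ((k + j + t).choose j : ℤ) - ((k + j).choose (j - t) : ℤ) := by
  have h := sum_neg_one_pow_mul_choose_mul_choose_add (k + j) hj
  rw [sum_range_succ, Nat.sub_self, Nat.choose_self] at h
  have hsign : ∀ i ∈ range t, (-1 : ℤ) ^ (t + i + 1) = -(-1) ^ (t - i) := fun i hi ↦ by
    rw [pow_succ, neg_one_pow_add_eq_pow_sub (mem_range.1 hi).le, mul_neg_one]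
  rw [← h, sum_congr rfl fun i hi ↦ by rw [hsign i hi]]
  simp only [neg_mul, sum_neg_distrib]
  ring

theorem alternating_binom_partial_ge (t k j : ℕ) (ht : 1 ≤ t) (hj : t ≤ j) :
    (∑ i ∈ Finset.range t,
        (-1 : ℤ) ^ (t + i + 1) * (t.choose i) * ((k + j + i).choose j))
      = ((k + j + t).choose j : ℤ) - ((k + j).choose (j - t) : ℤ) :=
  alternating_binom_partial_ge_general t k j hj
end

section
/- Let p be a prime and m a positive integer. The p^m × p^m matrix over F_p with entries binomial(i+j, j) mod p for 0 ≤ i, j < p^m is an upper anti-diagonal triangular matrix: all entries with i + j > p^m - 1 are zero, all anti-diagonal entries (i + j = p^m - 1) are nonzero, and the first row and first column consist entirely of 1s. In particular the matrix is invertible over F_p. -/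
/-- Kummer: adding `i` and `j` in base `p` carries out of the digit block below `p ^ m`. -/
theorem Nat.Prime.dvd_choose_add_of_pow_le {p m i j : ℕ} (hp : p.Prime) (hi : i < p ^ m)
    (hj : j < p ^ m) (hij : p ^ m ≤ i + j) : p ∣ (i + j).choose j := by
  have := Fact.mk hp
  have hm : m ≠ 0 := by rintro rfl; rw [pow_zero] at hi hj hij; omega
  have hlog : m ≤ Nat.log p (i + j) := Nat.le_log_of_pow_le hp.one_lt hij
  have hcarry :
      m ∈ {t ∈ Finset.Ico 1 (Nat.log p (i + j) + 1) | p ^ t ≤ j % p ^ t + i % p ^ t} := by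
    simp only [Finset.mem_filter, Finset.mem_Ico, Nat.mod_eq_of_lt hi, Nat.mod_eq_of_lt hj]
    omega
  apply dvd_of_one_le_padicValNat
  rw [padicValNat_choose' (Nat.lt_succ_self _)]
  exact Finset.card_pos.2 ⟨m, hcarry⟩

/-- Pascal's rule against `p ∣ (p ^ m).choose (k + 1)` gives the alternating recursion. -/
theorem cast_choose_prime_pow_sub_one {p m k : ℕ} (hp : p.Prime) (R : Type*) [Ring R] [CharP R p]
    (hk : k < p ^ m) : ((p ^ m - 1).choose k : R) = (-1) ^ k := by
  induction k with
  | zero => simp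
  | succ k ih =>
    have hpascal : (p ^ m).choose (k + 1) = (p ^ m - 1).choose k + (p ^ m - 1).choose (k + 1) := by
      rw [← Nat.choose_succ_succ', Nat.sub_add_cancel (Nat.one_le_pow _ _ hp.pos)]
    have hdvd : ((p ^ m).choose (k + 1) : R) = 0 :=
      (CharP.cast_eq_zero_iff R p _).2 (hp.dvd_choose_pow k.succ_ne_zero hk.ne)
    rw [hpascal, Nat.cast_add, ih (by omega)] at hdvd
    rw [pow_succ, mul_neg_one, ← sub_eq_zero, sub_neg_eq_add, add_comm, hdvd]

theorem Matrix.sign_mul_det_of_antitriangular {R : Type*} [CommRing R] {n : ℕ}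
    (M : Matrix (Fin n) (Fin n) R) (h : ∀ i j : Fin n, j.rev < i → M i j = 0) :
    (Equiv.Perm.sign (Fin.revPerm : Equiv.Perm (Fin n)) : R) * M.det = ∏ i, M i i.rev := by
  rw [← det_permute', det_of_isUpperTriangular]
  · rfl
  · intro i j hij
    exact h i _ (by simpa using hij)

theorem pascal_anti_triangular_general (p m : ℕ) (hp : p.Prime) :
    (∀ i j : Fin (p ^ m), p ^ m - 1 < (i : ℕ) + (j : ℕ) →
        (((i : ℕ) + (j : ℕ)).choose (j : ℕ) : ZMod p) = 0) ∧
    (∀ i j : Fin (p ^ m), (i : ℕ) + (j : ℕ) = p ^ m - 1 →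
        (((i : ℕ) + (j : ℕ)).choose (j : ℕ) : ZMod p) ≠ 0) ∧
    (∀ j : Fin (p ^ m), (((0 : ℕ) + (j : ℕ)).choose (j : ℕ) : ZMod p) = 1) ∧
    (∀ i : Fin (p ^ m), (((i : ℕ) + (0 : ℕ)).choose (0 : ℕ) : ZMod p) = 1) ∧
    IsUnit (Matrix.of (fun (i j : Fin (p ^ m)) =>
      (((i : ℕ) + (j : ℕ)).choose (j : ℕ) : ZMod p))).det := by
  have := Fact.mk hp
  have hzero : ∀ i j : Fin (p ^ m), p ^ m - 1 < (i : ℕ) + j →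
      (((i : ℕ) + j).choose j : ZMod p) = 0 := fun i j hij =>
    (ZMod.natCast_eq_zero_iff _ _).2 (hp.dvd_choose_add_of_pow_le i.isLt j.isLt (by omega))
  have hanti : ∀ i j : Fin (p ^ m), (i : ℕ) + j = p ^ m - 1 →
      (((i : ℕ) + j).choose j : ZMod p) ≠ 0 := by
    intro i j hij
    rw [hij, cast_choose_prime_pow_sub_one hp (ZMod p) (by omega)]
    exact pow_ne_zero _ (neg_ne_zero.2 one_ne_zero)
  refine ⟨hzero, hanti, fun j => by simp, fun i => by simp, isUnit_iff_ne_zero.2 ?_⟩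
  have hdet := Matrix.sign_mul_det_of_antitriangular _ fun i j hij =>
    hzero i j (by rw [Fin.lt_def, Fin.val_rev] at hij; omega)
  refine right_ne_zero_of_mul (hdet ▸ Finset.prod_ne_zero_iff.2 fun i _ => ?_)
  exact hanti i i.rev (by rw [Fin.val_rev]; omega)

theorem pascal_anti_triangular (p m : ℕ) (hp : p.Prime) (hm : 1 ≤ m) :
    (∀ i j : Fin (p ^ m), p ^ m - 1 < (i : ℕ) + (j : ℕ) →
        (((i : ℕ) + (j : ℕ)).choose (j : ℕ) : ZMod p) = 0) ∧
    (∀ i j : Fin (p ^ m), (i : ℕ) + (j : ℕ) = p ^ m - 1 →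
        (((i : ℕ) + (j : ℕ)).choose (j : ℕ) : ZMod p) ≠ 0) ∧
    (∀ j : Fin (p ^ m), (((0 : ℕ) + (j : ℕ)).choose (j : ℕ) : ZMod p) = 1) ∧
    (∀ i : Fin (p ^ m), (((i : ℕ) + (0 : ℕ)).choose (0 : ℕ) : ZMod p) = 1) ∧
    IsUnit (Matrix.of (fun (i j : Fin (p ^ m)) =>
      (((i : ℕ) + (j : ℕ)).choose (j : ℕ) : ZMod p))).det :=
  pascal_anti_triangular_general p m hp
end

section
/- Let p be a prime, m a positive integer, u = (u_0, ..., u_{p^m-1}) a vector of units in F_p, and η = (η_0, ..., η_{p^m-1}) a sequence of non-negative integers with η_0 = 0 and η_j ≤ η_{j+1} ≤ η_j + 1 for all j. Then for every t with 1 ≤ t ≤ p^m and every l ≥ 0 with l + t ≤ p^m, the t×t matrix over F_p with entries binomial(i+j-η_j, j)·u_j, for i = l, ..., l+t-1 and j = 0, ..., t-1, is invertible modulo p. -/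
/-!
Every column `j` of the matrix is `u_j` times the column `(binomial(i + a_j, j))_i` with
`a_j = l + j - η_j`, which is a genuine natural number since `η_j ≤ j`. By Vandermonde's identity
the matrix `(binomial(i + a_j, j))_{i,j}` is the product of the unitriangular Pascal matrix
`(binomial(i, s))_{i,s}` and the upper unitriangular matrix `(binomial(a_j, j - s))_{s,j}`, so it has
determinant `1`, and the determinant of the whole matrix is `u_0 ⋯ u_{t-1} ≠ 0`.
-/

open Finset Matrix

lemma le_self_of_map_succ_le_add_one {f : ℕ → ℕ} {N : ℕ} (h0 : f 0 = 0)
    (hstep : ∀ j, j + 1 < N → f (j + 1) ≤ f j + 1) : ∀ j < N, f j ≤ j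
  | 0, _ => h0.le
  | j + 1, hj =>
    (hstep j hj).trans (Nat.succ_le_succ (le_self_of_map_succ_le_add_one h0 hstep j (by omega)))

lemma Nat.add_choose_eq_sum_range {j n : ℕ} (hj : j < n) (a b : ℕ) :
    (a + b).choose j = ∑ s ∈ range n, a.choose s * if s ≤ j then b.choose (j - s) else 0 := by
  rw [Nat.add_choose_eq, Nat.sum_antidiagonal_eq_sum_range_succ_mk,
    ← sum_subset (range_subset_range.2 hj)]
  · refine sum_congr rfl fun s hs => ?_
    rw [if_pos (Nat.lt_succ_iff.1 (mem_range.1 hs))]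
  · intro s _ hs
    rw [if_neg (by simpa using hs), mul_zero]

section Pascal

variable {R : Type*} [CommRing R] {n : ℕ}

lemma det_of_choose : (of fun i j : Fin n => ((i : ℕ).choose j : R)).det = 1 := by
  rw [det_of_isLowerTriangular _ fun i j (h : i < j) =>
    by rw [of_apply, Nat.choose_eq_zero_of_lt h, Nat.cast_zero]]
  simp

lemma of_choose_add_eq_mul (a : Fin n → ℕ) :
    of (fun i j : Fin n => ((i + a j : ℕ).choose j : R)) =
      of (fun i s : Fin n => ((i : ℕ).choose s : R)) *
        of (fun s j : Fin n => if (s : ℕ) ≤ j then ((a j).choose (j - s) : R) else 0) := by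
  ext i j
  rw [of_apply, Nat.add_choose_eq_sum_range j.2, mul_apply, ← Fin.sum_univ_eq_sum_range]
  push_cast
  simp only [of_apply]

lemma det_of_choose_add (a : Fin n → ℕ) :
    (of fun i j : Fin n => ((i + a j : ℕ).choose j : R)).det = 1 := by
  rw [of_choose_add_eq_mul, det_mul, det_of_choose, one_mul, det_of_isUpperTriangular]
  · simp
  · exact fun s j (h : j < s) => if_neg (not_le.2 h)

end Pascal

theorem shifted_pascal_submatrix_invertible_general (p m : ℕ) (hp : p.Prime)
    (u : ℕ → ZMod p) (hu : ∀ j, j < p ^ m → u j ≠ 0)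
    (η : ℕ → ℕ) (hη0 : η 0 = 0)
    (hηmono : ∀ j, j + 1 < p ^ m → η j ≤ η (j + 1) ∧ η (j + 1) ≤ η j + 1)
    (t l : ℕ) (hlt : l + t ≤ p ^ m) :
    IsUnit (Matrix.of (fun (i j : Fin t) =>
      (if η (j : ℕ) ≤ l + (i : ℕ) + (j : ℕ) then
        (((l + (i : ℕ) + (j : ℕ) - η (j : ℕ)).choose (j : ℕ) : ℕ) : ZMod p)
      else 0) * u (j : ℕ))).det := by
  have : Fact p.Prime := ⟨hp⟩
  have hj : ∀ j : Fin t, (j : ℕ) < p ^ m := fun j => by omega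
  have hηj : ∀ j : Fin t, η j ≤ j := fun j =>
    le_self_of_map_succ_le_add_one hη0 (fun k hk => (hηmono k hk).2) j (hj j)
  have hfac : of (fun i j : Fin t =>
      (if η j ≤ l + i + j then ((l + i + j - η j).choose j : ZMod p) else 0) * u j) =
      of (fun i j : Fin t => ((i + (l + j - η j) : ℕ).choose j : ZMod p)) *
        diagonal fun j : Fin t => u j := by
    ext i j
    rw [mul_diagonal, of_apply, of_apply, if_pos (by have := hηj j; omega),
      show l + i + j - η j = i + (l + j - η j) by have := hηj j; omega]
  rw [hfac, det_mul, det_of_choose_add (fun j : Fin t => l + j - η j), det_diagonal, one_mul,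
    isUnit_iff_ne_zero]
  exact prod_ne_zero_iff.2 fun j _ => hu j (hj j)

theorem shifted_pascal_submatrix_invertible (p m : ℕ) (hp : p.Prime) (hm : 1 ≤ m)
    (u : ℕ → ZMod p) (hu : ∀ j, j < p ^ m → u j ≠ 0)
    (η : ℕ → ℕ) (hη0 : η 0 = 0)
    (hηmono : ∀ j, j + 1 < p ^ m → η j ≤ η (j + 1) ∧ η (j + 1) ≤ η j + 1)
    (t l : ℕ) (ht : 1 ≤ t) (hlt : l + t ≤ p ^ m) :
    IsUnit (Matrix.of (fun (i j : Fin t) =>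
      (if η (j : ℕ) ≤ l + (i : ℕ) + (j : ℕ) then
        (((l + (i : ℕ) + (j : ℕ) - η (j : ℕ)).choose (j : ℕ) : ℕ) : ZMod p)
      else 0) * u (j : ℕ))).det :=
  shifted_pascal_submatrix_invertible_general p m hp u hu η hη0 hηmono t l hlt
end

section
/- If w is a b-ary (k,l)-nested semi-perfect necklace, then l ≥ k/2. -/
/-- A word `w` (of length `l * b ^ k`, read cyclically, over the alphabet `ZMod b`)
is a `(k, l)`-semi-perfect `b`-ary necklace: each word of length `k` occurs
exactly `l` times (occurrences counted cyclically). -/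
def SemiPerfectNecklace (b k l : ℕ) (w : ℕ → ZMod b) : Prop :=
  ∀ v : Fin k → ZMod b,
    ((Finset.range (l * b ^ k)).filter
      (fun i => ∀ s : Fin k, w ((i + (s : ℕ)) % (l * b ^ k)) = v s)).card = l

/-- A word of length `l * b ^ k` is a `(k, l)`-nested semi-perfect `b`-ary necklace:
for each `j ∈ {1, …, k}`, each block of length `l * b ^ j` starting at a position
congruent to `1` modulo `l * b ^ j` (i.e. at a multiple of `l * b ^ j` in 0-based
indexing) is a `(j, l)`-semi-perfect necklace. -/
def NestedSemiPerfectNecklace (b k l : ℕ) (w : ℕ → ZMod b) : Prop :=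
  ∀ j, 1 ≤ j → j ≤ k → ∀ a : ℕ, (a + 1) * (l * b ^ j) ≤ l * b ^ k →
    SemiPerfectNecklace b j l (fun i => w (a * (l * b ^ j) + i))

/-!
Write `N = l * b ^ k` and `L = l * b`. The whole word is a `(k, l)`-semi-perfect necklace, so it
contains, cyclically, a run of `k` zeros. Each aligned block of length `L` is `(1, l)`-semi-perfect,
so it contains exactly `l` zeros; in particular a run of zeros meets such a block in at most `l`
positions, and since `l < L` it cannot cover a whole block. As `L ∣ N`, the aligned blocks of the
periodic extension of the word are the blocks of the word itself, and the run of `k` zeros, starting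
in some block, ends in the next one. Hence `k ≤ l + l`.
-/

def IsRun {α : Type*} (f : ℕ → α) (x : α) (p c : ℕ) : Prop :=
  ∀ s < c, f (p + s) = x

namespace IsRun

variable {α : Type*} {f : ℕ → α} {x : α} {p c : ℕ}

theorem mono (h : IsRun f x p c) {c' : ℕ} (hc : c' ≤ c) : IsRun f x p c' :=
  fun s hs => h s (by omega)

theorem shift (h : IsRun f x p c) {m : ℕ} (hm : m ≤ c) : IsRun f x (p + m) (c - m) :=
  fun s hs => by rw [add_assoc]; exact h (m + s) (by omega)

variable {L l : ℕ} (hlL : l < L)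
  (hblock : ∀ a p c, p + c ≤ L → IsRun f x (a * L + p) c → c ≤ l)
include hlL hblock

/-- A run starting at a block boundary cannot cover the whole block, so it stays inside it. -/
theorem le_of_blockwise {a : ℕ} (h : IsRun f x (a * L) c) : c ≤ l := by
  have := hblock a 0 (min c L) (by omega) (by simpa using h.mono (min_le_left c L))
  omega

theorem le_two_mul_of_blockwise (h : IsRun f x p c) : c ≤ 2 * l := by
  set a := p / L
  have hstart : a * L ≤ p := Nat.div_mul_le_self p L
  have hend : p < a * L + L := Nat.lt_div_mul_add (by omega)
  have hp : a * L + (p - a * L) = p := by omega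
  by_cases hc : c ≤ a * L + L - p
  · exact (hblock a (p - a * L) c (by omega) (by rwa [hp])).trans (by omega)
  · have hfirst : a * L + L - p ≤ l :=
      hblock a (p - a * L) _ (by omega) (by rw [hp]; exact h.mono (by omega))
    have hsecond : c - (a * L + L - p) ≤ l :=
      le_of_blockwise hlL hblock (a := a + 1) <| by
        convert h.shift (m := a * L + L - p) (by omega) using 1; rw [add_one_mul]; omega
    omega

end IsRun

theorem Nat.mul_add_mod_mul_of_lt {a t L : ℕ} (M : ℕ) (ht : t < L) :
    (a * L + t) % (M * L) = a % M * L + t := by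
  rcases Nat.eq_zero_or_pos M with rfl | hM
  · simp
  have hlt : a % M * L + t < M * L := by nlinarith [Nat.mod_lt a hM]
  have : a * L + t = a % M * L + t + a / M * (M * L) := by
    conv_lhs => rw [← Nat.mod_add_div a M]
    ring
  rw [this, Nat.add_mul_mod_self_right, Nat.mod_eq_of_lt hlt]

theorem SemiPerfectNecklace.exists_isRun {b k l : ℕ} {w : ℕ → ZMod b}
    (hw : SemiPerfectNecklace b k l w) (hl : 0 < l) (x : ZMod b) :
    ∃ i, IsRun (fun t => w (t % (l * b ^ k))) x i k := by
  obtain ⟨i, hi⟩ := Finset.card_pos.mp (by rw [hw fun _ => x]; exact hl)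
  exact ⟨i, fun s hs => (Finset.mem_filter.mp hi).2 ⟨s, hs⟩⟩

theorem SemiPerfectNecklace.run_le_of_one {b l p c : ℕ} {w : ℕ → ZMod b} {x : ZMod b}
    (hw : SemiPerfectNecklace b 1 l w) (hpc : p + c ≤ l * b) (h : IsRun w x p c) : c ≤ l := by
  have hsub : Finset.Ico p (p + c) ⊆ (Finset.range (l * b ^ 1)).filter
      (fun i => ∀ s : Fin 1, w ((i + s) % (l * b ^ 1)) = x) := by
    intro i hi
    obtain ⟨hpi, hic⟩ := Finset.mem_Ico.mp hi
    refine Finset.mem_filter.mpr ⟨Finset.mem_range.mpr (by rw [pow_one]; omega), fun r => ?_⟩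
    rw [Fin.val_eq_zero r, add_zero, pow_one, Nat.mod_eq_of_lt (by omega)]
    simpa [hpi] using h (i - p) (by omega)
  calc c = (Finset.Ico p (p + c)).card := by simp
    _ ≤ _ := Finset.card_le_card hsub
    _ = l := hw fun _ => x

theorem NestedSemiPerfectNecklace.run_le {b k l : ℕ} {w : ℕ → ZMod b}
    (hw : NestedSemiPerfectNecklace b k l w) (hb : 0 < b) (hk : 1 ≤ k) {a p c : ℕ} {x : ZMod b}
    (hpc : p + c ≤ l * b) (h : IsRun (fun t => w (t % (l * b ^ k))) x (a * (l * b) + p) c) :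
    c ≤ l := by
  have hN : l * b ^ k = b ^ (k - 1) * (l * b) :=
    calc l * b ^ k = l * b ^ (k - 1 + 1) := by rw [Nat.sub_add_cancel hk]
      _ = b ^ (k - 1) * (l * b) := by ring
  have hblock := hw 1 le_rfl hk (a % b ^ (k - 1)) <| by
    rw [hN, pow_one]
    exact Nat.mul_le_mul_right _ (Nat.mod_lt a (by positivity))
  refine hblock.run_le_of_one (x := x) hpc fun s hs => ?_
  have : w ((a * (l * b) + p + s) % (l * b ^ k)) = x := h s hs
  rw [hN, add_assoc, Nat.mul_add_mod_mul_of_lt _ (by omega)] at this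
  rwa [pow_one]

theorem nested_semi_perfect_necklace_le (b k l : ℕ) (hb : 2 ≤ b) (hk : 1 ≤ k)
    (hl : 1 ≤ l) (w : ℕ → ZMod b) (hw : NestedSemiPerfectNecklace b k l w) :
    k ≤ 2 * l := by
  have hlL : l < l * b := lt_mul_of_one_lt_right hl hb
  have hwhole : SemiPerfectNecklace b k l w := by
    simpa using hw k hk le_rfl 0 (by simp)
  obtain ⟨i, hrun⟩ := hwhole.exists_isRun hl 0
  exact hrun.le_two_mul_of_blockwise hlL fun a p c hpc h => hw.run_le (by omega) hk hpc h
end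

section
/- Let b ≥ 2, let w be a word of length l·b^k over {0,...,b-1}, and let z be a word of length l over {0,...,b-1}. Let z^{b^k} denote the concatenation of b^k copies of z, and define w' = w + z^{b^k} mod b (digit-wise addition modulo b). Then w is a (k,l)-nested perfect b-ary necklace if and only if w' is a (k,l)-nested perfect b-ary necklace. -/
/-- A word `w` (of length `l * b ^ k`, read cyclically, over the alphabet `ZMod b`)
is a `(k, l)`-perfect `b`-ary necklace: each word of length `k` occurs exactly `l`
times, at positions which are pairwise different modulo `l`; equivalently, for each
residue `r` modulo `l` there is exactly one occurrence at a position `≡ r (mod l)`. -/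
def PerfectNecklace (b k l : ℕ) (w : ℕ → ZMod b) : Prop :=
  ∀ v : Fin k → ZMod b, ∀ r, r < l →
    ((Finset.range (l * b ^ k)).filter
      (fun i => i % l = r ∧ ∀ s : Fin k, w ((i + (s : ℕ)) % (l * b ^ k)) = v s)).card = 1

/-- A word of length `l * b ^ k` is a `(k, l)`-nested perfect `b`-ary necklace:
for each `j ∈ {1, …, k}`, each block of length `l * b ^ j` starting at a position
congruent to `1` modulo `l * b ^ j` (i.e. at a multiple of `l * b ^ j` in 0-based
indexing) is a `(j, l)`-perfect necklace. -/
def NestedPerfectNecklace (b k l : ℕ) (w : ℕ → ZMod b) : Prop :=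
  ∀ j, 1 ≤ j → j ≤ k → ∀ a : ℕ, (a + 1) * (l * b ^ j) ≤ l * b ^ k →
    PerfectNecklace b j l (fun i => w (a * (l * b ^ j) + i))

/-! Adding an `l`-periodic word `z` changes the window of length `j` starting at a position
`i ≡ r (mod l)` by the fixed word `z_r z_{r+1} ⋯`, so for each residue `r` it permutes the
words of length `j` and preserves perfectness; subtracting `z` undoes it. Nested blocks start at
multiples of `l`, so `z` restricts to every block with the same phase. -/

theorem PerfectNecklace.add_periodic {b k l : ℕ} {w : ℕ → ZMod b}
    (h : PerfectNecklace b k l w) (z : ℕ → ZMod b) :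
    PerfectNecklace b k l (fun i => w i + z (i % l)) := by
  intro v r hr
  -- the cyclic reduction modulo `l * b ^ k` does not change residues modulo `l`
  rw [← h (fun s => v s - z ((r + s) % l)) r hr]
  congr 1
  refine Finset.filter_congr fun i _ => and_congr_right fun hir => forall_congr' fun s => ?_
  dsimp only
  rw [Nat.mod_mod_of_dvd _ (dvd_mul_right l _), ← Nat.mod_add_mod i l, hir, eq_sub_iff_add_eq]

theorem perfectNecklace_add_periodic_iff {b k l : ℕ} (w z : ℕ → ZMod b) :
    PerfectNecklace b k l (fun i => w i + z (i % l)) ↔ PerfectNecklace b k l w :=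
  ⟨fun h => by simpa using h.add_periodic (-z), fun h => h.add_periodic z⟩

theorem nested_perfect_add_periodic_iff_general (b k l : ℕ) (w : ℕ → ZMod b) (z : ℕ → ZMod b) :
    NestedPerfectNecklace b k l w ↔
      NestedPerfectNecklace b k l (fun i => w i + z (i % l)) := by
  have block_residue (j a i : ℕ) : (a * (l * b ^ j) + i) % l = i % l := by
    rw [mul_left_comm, Nat.mul_add_mod]
  simp only [NestedPerfectNecklace, block_residue, perfectNecklace_add_periodic_iff]

theorem nested_perfect_add_periodic_iff (b k l : ℕ) (hb : 2 ≤ b) (hk : 1 ≤ k)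
    (hl : 1 ≤ l) (w : ℕ → ZMod b) (z : ℕ → ZMod b) :
    NestedPerfectNecklace b k l w ↔
      NestedPerfectNecklace b k l (fun i => w i + z (i % l)) :=
  nested_perfect_add_periodic_iff_general b k l w z
end

section
/- Let p be prime and m > 7. Consider the matrix D_m over F_p with entries binomial(i+1+j, j) - 1 mod p, indexed by p^{m-3} - p(p^3-1)p^{m-7} ≤ i < p^{m-3} and 0 ≤ j < p^{m-7}. Then the number of entries of D_m equal to p-1 (i.e., entries where binomial(i+1+j,j) ≡ 0 mod p) equals p(p^3-1)p^{m-7} · p^{m-7} · (1 - ((p+1)/(2p))^{m-7}). -/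
/-!
By Lucas' theorem, `p ∤ C(n + j, j)` exactly when adding `n` and `j` in base `p` produces no
carry. For `j < p ^ t` only the lowest `t` digits of `n` matter, so the number of such `j` is
`p ^ t`-periodic in the row index, and the rows of `D_m` cover `p (p ^ 3 - 1)` full periods.
Over one period the carry-free pairs are counted digit by digit: `p (p + 1) / 2` digit pairs
`a + b < p` in each of the `t` positions. The zero entries are the complement.
-/

open Finset

namespace Function.Periodic

variable {M : Type*} [AddCommMonoid M] {f : ℕ → M} {T : ℕ}

theorem sum_Ico_add_self (hf : Periodic f T) (a : ℕ) :
    ∑ i ∈ Ico a (a + T), f i = ∑ i ∈ range T, f i := by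
  rw [← Nat.image_Ico_mod a T, sum_image (Nat.mod_injOn_Ico a T)]
  exact sum_congr rfl fun i _ => (hf.map_mod_nat i).symm

theorem sum_Ico_add_mul (hf : Periodic f T) (a c : ℕ) :
    ∑ i ∈ Ico a (a + c * T), f i = c • ∑ i ∈ range T, f i := by
  induction c with
  | zero => simp
  | succ c ih =>
    rw [add_mul, one_mul, ← add_assoc,
      ← sum_Ico_consecutive _ (Nat.le_add_right a (c * T)) (Nat.le_add_right _ T), ih,
      hf.sum_Ico_add_self, succ_nsmul]

end Function.Periodic

theorem Finset.card_filter_product_eq_sum {α β : Type*} (s : Finset α) (t : Finset β)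
    (P : α × β → Prop) [DecidablePred P] :
    #{x ∈ s ×ˢ t | P x} = ∑ a ∈ s, #{b ∈ t | P (a, b)} := by
  simp only [card_filter, sum_product]

namespace Nat

def NoCarry (p : ℕ) : ℕ → ℕ → ℕ → Prop
  | 0, _, _ => True
  | t + 1, n, j => n % p + j % p < p ∧ NoCarry p t (n / p) (j / p)

instance decidableNoCarry (p : ℕ) : ∀ t n j, Decidable (NoCarry p t n j)
  | 0, _, _ => .isTrue trivial
  | t + 1, n, j =>
    have := decidableNoCarry p t (n / p) (j / p)
    inferInstanceAs (Decidable (_ ∧ _))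

variable {p : ℕ}

theorem noCarry_add_pow (hp : 0 < p) : ∀ t n j, NoCarry p t (n + p ^ t) j ↔ NoCarry p t n j
  | 0, _, _ => Iff.rfl
  | t + 1, n, j => by
    rw [NoCarry, NoCarry, pow_succ', add_mul_mod_self_left, add_mul_div_left _ _ hp,
      noCarry_add_pow hp t]

theorem Prime.not_dvd_choose_add_iff_noCarry (hp : p.Prime) :
    ∀ {t n j}, j < p ^ t → (¬ p ∣ (n + j).choose j ↔ NoCarry p t n j)
  | 0, n, j, hj => by
    obtain rfl : j = 0 := by simpa using hj
    simp [NoCarry, hp.ne_one]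
  | t + 1, n, j, hj => by
    have := Fact.mk hp
    rw [(Choose.choose_modEq_choose_mod_mul_choose_div_nat).dvd_iff dvd_rfl, NoCarry]
    by_cases hc : n % p + j % p < p
    · have hjp : j / p < p ^ t := by rw [Nat.div_lt_iff_lt_mul hp.pos, ← pow_succ]; exact hj
      rw [add_mod_of_add_mod_lt hc, add_div_eq_of_add_mod_lt hc,
        (hp.coprime_choose_of_lt hc (Nat.le_add_left _ _)).dvd_mul_left,
        hp.not_dvd_choose_add_iff_noCarry hjp]
      simp [hc]
    · -- a carry makes the lowest digit of `n + j` smaller than that of `j`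
      have hlt : (n + j) % p < j % p := by
        have := add_mod_add_of_le_add_mod (not_lt.mp hc)
        have := mod_lt n hp.pos
        omega
      simp [choose_eq_zero_of_lt hlt, hc]

theorem card_filter_noCarry (hp : 0 < p) (t : ℕ) :
    #{x ∈ range (p ^ t) ×ˢ range (p ^ t) | NoCarry p t x.1 x.2}
      = #{x ∈ range p ×ˢ range p | x.1 + x.2 < p} ^ t := by
  induction t with
  | zero => simp [NoCarry]
  | succ t ih =>
    have digit_lt {a r : ℕ} (ha : a < p) : a + p * r < p ^ (t + 1) ↔ r < p ^ t := by
      rw [pow_succ, ← Nat.div_lt_iff_lt_mul hp, add_mul_div_left _ _ hp, div_eq_of_lt ha,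
        zero_add]
    conv_rhs => rw [pow_succ', ← ih, ← card_product]
    apply card_nbij' (fun x => ((x.1 % p, x.2 % p), (x.1 / p, x.2 / p)))
      (fun y => (y.1.1 + p * y.2.1, y.1.2 + p * y.2.2))
    · rintro ⟨n, m⟩ h
      simp only [mem_coe, mem_filter, mem_product, mem_range] at h ⊢
      rw [NoCarry] at *
      obtain ⟨⟨hn, hm⟩, hc, hcs⟩ := h
      rw [pow_succ'] at hn hm
      exact ⟨⟨⟨mod_lt n hp, mod_lt m hp⟩, hc⟩,
        ⟨Nat.div_lt_of_lt_mul hn, Nat.div_lt_of_lt_mul hm⟩, hcs⟩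
    · rintro ⟨⟨a, b⟩, r, s⟩ h
      simp only [mem_coe, mem_filter, mem_product, mem_range] at h ⊢
      rw [NoCarry] at *
      obtain ⟨⟨⟨ha, hb⟩, hab⟩, ⟨hr, hs⟩, hcs⟩ := h
      simp only [digit_lt ha, digit_lt hb, add_mul_mod_self_left, add_mul_div_left _ _ hp,
        mod_eq_of_lt ha, mod_eq_of_lt hb, div_eq_of_lt ha, div_eq_of_lt hb, zero_add]
      exact ⟨⟨hr, hs⟩, hab, hcs⟩
    · rintro ⟨n, m⟩ -
      simp [mod_add_div]
    · rintro ⟨⟨a, b⟩, r, s⟩ h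
      simp only [mem_coe, mem_filter, mem_product, mem_range] at h
      simp [add_mul_div_left _ _ hp, mod_eq_of_lt, div_eq_of_lt, h.1.1.1, h.1.1.2]

theorem periodic_card_filter_noCarry (hp : 0 < p) (t : ℕ) :
    Function.Periodic (fun n => #{j ∈ range (p ^ t) | NoCarry p t n j}) (p ^ t) := fun n => by
  simp only [noCarry_add_pow hp]

theorem two_mul_card_filter_add_lt (p : ℕ) :
    2 * #{x ∈ range p ×ˢ range p | x.1 + x.2 < p} = p * (p + 1) := by
  have fiber (a : ℕ) (ha : a ∈ range p) : #{b ∈ range p | a + b < p} = p - 1 - a + 1 := by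
    rw [mem_range] at ha
    rw [show {b ∈ range p | a + b < p} = range (p - a) by ext; simp; omega, card_range]
    omega
  calc 2 * #{x ∈ range p ×ˢ range p | x.1 + x.2 < p}
      = 2 * ∑ a ∈ range p, (p - 1 - a + 1) := by
        rw [card_filter_product_eq_sum, sum_congr rfl fiber]
    _ = 2 * ∑ i ∈ range (p + 1), i := by
        rw [sum_range_reflect (· + 1) p, sum_range_succ', add_zero]
    _ = p * (p + 1) := by
        rw [mul_comm, sum_range_id_mul_two, add_tsub_cancel_right, mul_comm]

theorem Prime.card_filter_not_dvd_choose (hp : p.Prime) (s a c t : ℕ) :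
    #{x ∈ Ico a (a + c * p ^ t) ×ˢ range (p ^ t) | ¬ p ∣ (x.1 + s + x.2).choose x.2}
      = c * #{x ∈ range p ×ˢ range p | x.1 + x.2 < p} ^ t := by
  have fiber (i : ℕ) : #{j ∈ range (p ^ t) | ¬ p ∣ (i + s + j).choose j}
      = #{j ∈ range (p ^ t) | NoCarry p t (i + s) j} :=
    congrArg card <| filter_congr fun j hj => hp.not_dvd_choose_add_iff_noCarry (mem_range.mp hj)
  rw [card_filter_product_eq_sum, sum_congr rfl fun i _ => fiber i,
    sum_Ico_add' (fun n => #{j ∈ range (p ^ t) | NoCarry p t n j}), add_right_comm,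
    (periodic_card_filter_noCarry hp.pos t).sum_Ico_add_mul, smul_eq_mul,
    ← card_filter_product_eq_sum (P := fun x => NoCarry p t x.1 x.2), card_filter_noCarry hp.pos]

end Nat

theorem count_zero_entries_D_m (p m : ℕ) (hp : p.Prime) (hm : 7 < m) :
    ((((Finset.Ico (p ^ (m - 3) - p * (p ^ 3 - 1) * p ^ (m - 7)) (p ^ (m - 3))) ×ˢ
        Finset.range (p ^ (m - 7))).filter
          (fun ij => p ∣ (ij.1 + 1 + ij.2).choose ij.2)).card : ℝ)
      = (p * (p ^ 3 - 1) * p ^ (m - 7) : ℕ) * (p ^ (m - 7) : ℕ) *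
          (1 - ((p + 1 : ℝ) / (2 * p)) ^ (m - 7)) := by
  rw [show m - 3 = m - 7 + 4 by omega]
  generalize m - 7 = t
  set c := p * (p ^ 3 - 1)
  have hlen : c * p ^ t ≤ p ^ (t + 4) :=
    calc c * p ^ t ≤ p * p ^ 3 * p ^ t :=
          Nat.mul_le_mul_right _ (Nat.mul_le_mul_left _ (Nat.sub_le _ _))
      _ = p ^ (t + 4) := by ring
  set a := p ^ (t + 4) - c * p ^ t
  have hsplit := card_filter_add_card_filter_not (s := Ico a (a + c * p ^ t) ×ˢ range (p ^ t))
    (fun x => p ∣ (x.1 + 1 + x.2).choose x.2)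
  rw [hp.card_filter_not_dvd_choose, card_product, Nat.card_Ico, card_range, add_tsub_cancel_left,
    tsub_add_cancel_of_le hlen] at hsplit
  have hT : (#{x ∈ range p ×ˢ range p | x.1 + x.2 < p} : ℝ) = p * (p + 1) / 2 := by
    rw [eq_div_iff two_ne_zero, mul_comm]
    exact_mod_cast Nat.two_mul_card_filter_add_lt p
  have hp0 : (p : ℝ) ≠ 0 := by exact_mod_cast hp.ne_zero
  have hR := congrArg (Nat.cast : ℕ → ℝ) hsplit
  push_cast at hR ⊢
  rw [eq_sub_of_add_eq hR, hT, div_pow, div_pow, mul_pow, mul_pow]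
  field_simp
end
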